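/- The 9-dimensional bracket structure E^3_{9,5}, defined on basis {X_0,...,X_8} by [X_0,X_i]=X_{i+1} for i=1,...,6; [X_0,X_8]=X_6; [X_1,X_4]=X_8; [X_1,X_5]=2X_6; [X_2,X_3]=-X_8; [X_2,X_4]=-X_6; [X_2,X_5]=2X_7; [X_3,X_4]=-3X_7 (other brackets zero up to antisymmetry), satisfies the Jacobi identity, hence defines a Lie algebra. -/

import Mathlib

open Finset

/-- The `k`-th standard basis vector of `ℂⁿ` (zero if `k ≥ n`). -/
noncomputable def E (n k : ℕ) : Fin n → ℂ := fun t => if (t : ℕ) = k then 1 else 0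

/-- The bilinear bracket on `ℂⁿ` determined by structure constants `s`, antisymmetrized:
`[e_i, e_j] = s i j - s j i`. -/
noncomputable def brkt (n : ℕ) (s : ℕ → ℕ → Fin n → ℂ) (x y : Fin n → ℂ) : Fin n → ℂ :=
  ∑ i : Fin n, ∑ j : Fin n, (x i * y j) • (s (i : ℕ) (j : ℕ) - s (j : ℕ) (i : ℕ))

/-- Structure constants common to `E¹_{9,5}`, `E²_{9,5}`, `E³_{9,5}`, with parameters
`p, q, r, s` giving the coefficients of `X₇` in `[X₁,X₆]`, `[X₂,X₅]`, `[X₂,X₈]`, `[X₃,X₄]`: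
`E¹ = sE95 3 (-1) (-3) 0`, `E² = sE95 1 1 (-1) (-2)`, `E³ = sE95 0 2 0 (-3)`. -/
noncomputable def sE95 (p q r s : ℂ) : ℕ → ℕ → Fin 9 → ℂ := fun i j =>
  (if i = 0 ∧ 1 ≤ j ∧ j ≤ 6 then E 9 (j + 1) else 0) +
  (if i = 0 ∧ j = 8 then E 9 6 else 0) +
  (if i = 1 ∧ j = 4 then E 9 8 else 0) +
  (if i = 1 ∧ j = 5 then (2 : ℂ) • E 9 6 else 0) +
  (if i = 2 ∧ j = 3 then -E 9 8 else 0) +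
  (if i = 2 ∧ j = 4 then -E 9 6 else 0) +
  (if i = 1 ∧ j = 6 then p • E 9 7 else 0) +
  (if i = 2 ∧ j = 5 then q • E 9 7 else 0) +
  (if i = 2 ∧ j = 8 then r • E 9 7 else 0) +
  (if i = 3 ∧ j = 4 then s • E 9 7 else 0)

/-! The Jacobi expression is trilinear, so it vanishes as soon as it vanishes on triples of basis
vectors. The structure constants of `E³_{9,5}` are integers, so these finitely many identities
are checked over `ℤ` by evaluation in the kernel and then carried to `ℂ` along `ℤ →+* ℂ`. -/

section StructureConstants

variable {R : Type*} [CommRing R] {n : ℕ}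

def bracket (c : Fin n → Fin n → Fin n → R) (x y : Fin n → R) : Fin n → R :=
  ∑ i, ∑ j, (x i * y j) • c i j

def antisymmetrize (s : ℕ → ℕ → Fin n → R) (i j : Fin n) : Fin n → R := s i j - s j i

/-- `[e_i, [e_j, e_k]] + [e_j, [e_k, e_i]] + [e_k, [e_i, e_j]]` for the bracket with constants `c`. -/
def jacobiator (c : Fin n → Fin n → Fin n → R) (i j k : Fin n) : Fin n → R :=
  ∑ m, (c j k m • c i m + c k i m • c j m + c i j m • c k m)

theorem bracket_bracket (c : Fin n → Fin n → Fin n → R) (x y z : Fin n → R) :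
    bracket c x (bracket c y z) = ∑ i, ∑ j, ∑ k, (x i * y j * z k) • ∑ m, c j k m • c i m := by
  simp only [bracket, Finset.sum_apply, Pi.smul_apply, smul_eq_mul, Finset.mul_sum,
    Finset.sum_smul, Finset.smul_sum, smul_smul]
  refine Finset.sum_congr rfl fun i _ => ?_
  rw [Finset.sum_comm]
  refine Finset.sum_congr rfl fun j _ => ?_
  rw [Finset.sum_comm]
  exact Finset.sum_congr rfl fun k _ => Finset.sum_congr rfl fun m _ => by simp only [mul_assoc]

theorem bracket_jacobi {c : Fin n → Fin n → Fin n → R} (hc : ∀ i j k, jacobiator c i j k = 0)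
    (x y z : Fin n → R) :
    bracket c x (bracket c y z) + bracket c y (bracket c z x) + bracket c z (bracket c x y) = 0 := by
  have rotate (f : Fin n → Fin n → Fin n → Fin n → R) :
      ∑ a, ∑ b, ∑ d, f a b d = ∑ d, ∑ a, ∑ b, f a b d :=
    (Finset.sum_congr rfl fun a _ => Finset.sum_comm).trans Finset.sum_comm
  rw [bracket_bracket, bracket_bracket, bracket_bracket,
    rotate fun i j k => (y i * z j * x k) • ∑ m, c j k m • c i m,
    ← rotate fun j k i => (z i * x j * y k) • ∑ m, c j k m • c i m]
  simp only [← Finset.sum_add_distrib]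
  refine Finset.sum_eq_zero fun i _ => Finset.sum_eq_zero fun j _ => Finset.sum_eq_zero fun k _ => ?_
  have hijk := hc i j k
  simp only [jacobiator, Finset.sum_add_distrib] at hijk
  rw [← smul_zero (x i * y j * z k), ← hijk]
  module

theorem jacobiator_map {S : Type*} [CommRing S] (f : R →+* S) (c : Fin n → Fin n → Fin n → R)
    (i j k : Fin n) : jacobiator (fun i j t => f (c i j t)) i j k = f ∘ jacobiator c i j k := by
  ext t
  simp [jacobiator, Finset.sum_apply, map_sum]

end StructureConstants

theorem brkt_eq_bracket (n : ℕ) (s : ℕ → ℕ → Fin n → ℂ) : brkt n s = bracket (antisymmetrize s) :=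
  rfl

def basisVec (R : Type*) [Zero R] [One R] (n k : ℕ) : Fin n → R :=
  fun t => if (t : ℕ) = k then 1 else 0

def sE95Ring (R : Type*) [Ring R] (p q r s : R) : ℕ → ℕ → Fin 9 → R := fun i j =>
  (if i = 0 ∧ 1 ≤ j ∧ j ≤ 6 then basisVec R 9 (j + 1) else 0) +
  (if i = 0 ∧ j = 8 then basisVec R 9 6 else 0) +
  (if i = 1 ∧ j = 4 then basisVec R 9 8 else 0) +
  (if i = 1 ∧ j = 5 then (2 : R) • basisVec R 9 6 else 0) +
  (if i = 2 ∧ j = 3 then -basisVec R 9 8 else 0) +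
  (if i = 2 ∧ j = 4 then -basisVec R 9 6 else 0) +
  (if i = 1 ∧ j = 6 then p • basisVec R 9 7 else 0) +
  (if i = 2 ∧ j = 5 then q • basisVec R 9 7 else 0) +
  (if i = 2 ∧ j = 8 then r • basisVec R 9 7 else 0) +
  (if i = 3 ∧ j = 4 then s • basisVec R 9 7 else 0)

theorem sE95_eq_sE95Ring : sE95 = sE95Ring ℂ := rfl

theorem sE95Ring_map {R S : Type*} [Ring R] [Ring S] (f : R →+* S) (p q r s : R) (i j : ℕ)
    (t : Fin 9) : sE95Ring S (f p) (f q) (f r) (f s) i j t = f (sE95Ring R p q r s i j t) := by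
  simp only [sE95Ring, basisVec, Pi.add_apply, apply_ite (fun v : Fin 9 → R => v t),
    apply_ite (fun v : Fin 9 → S => v t), Pi.smul_apply, Pi.neg_apply, Pi.zero_apply, smul_eq_mul,
    map_add, apply_ite f, map_mul, map_neg, map_one, map_zero, map_ofNat]

theorem jacobiator_antisymmetrize_sE95Ring_int (i j k : Fin 9) :
    jacobiator (antisymmetrize (sE95Ring ℤ 0 2 0 (-3))) i j k = 0 := by
  revert i j k
  decide +kernel

/-- the bracket of `E³_{9,5}` satisfies the Jacobi identity. -/
theorem stmt_13 :
    ∀ x y z : Fin 9 → ℂ,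
      brkt 9 (sE95 0 2 0 (-3)) x (brkt 9 (sE95 0 2 0 (-3)) y z) +
        brkt 9 (sE95 0 2 0 (-3)) y (brkt 9 (sE95 0 2 0 (-3)) z x) +
        brkt 9 (sE95 0 2 0 (-3)) z (brkt 9 (sE95 0 2 0 (-3)) x y) = 0 := by
  have hcast : antisymmetrize (sE95 0 2 0 (-3)) =
      fun i j t => Int.castRingHom ℂ (antisymmetrize (sE95Ring ℤ 0 2 0 (-3)) i j t) := by
    ext i j t
    simp only [antisymmetrize, Pi.sub_apply, map_sub, ← sE95Ring_map]
    simp [sE95_eq_sE95Ring]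
  rw [brkt_eq_bracket, hcast]
  refine bracket_jacobi fun i j k => ?_
  rw [jacobiator_map, jacobiator_antisymmetrize_sE95Ring_int]
  exact funext fun _ => map_zero _
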